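/- Then, in ℚ⟦t⟧, ∑_{k≥2} F_Vb(k)·t^k = [ (1+3t²)(p−1)/(2³·3·(1−t²)²) + (1−(−1/p))/(2³·(1−t²)) + (1−(−3/p))/(2·3·(1+t²+t⁴)) − bh/(2²·(1−t²)) ]·t². (This is the equivalence of the closed formula and the generating function for s_k(p,Vb) in the paper's Theorem on Saito-Kurokawa type.) -/

import Mathlib

open PowerSeries

noncomputable section

/-- `c₃(k) = [1,−1,0;3]_k` -/
def c3 (k : ℕ) : ℚ := if k % 3 = 0 then 1 else if k % 3 = 1 then -1 else 0

/-- `ĉ₃(k) = [0,1,−1;3]_k` -/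
def c3hat (k : ℕ) : ℚ := if k % 3 = 0 then 0 else if k % 3 = 1 then 1 else -1

/-- `c₄(k) = [1,0,0,−1;4]_k` -/
def c4 (k : ℕ) : ℚ := if k % 4 = 0 then 1 else if k % 4 = 3 then -1 else 0

/-- `c₄′(k) = [1,−1,−1,1;4]_k` -/
def c4' (k : ℕ) : ℚ := if k % 4 = 0 then 1 else if k % 4 = 3 then 1 else -1

/-- `c₅(k) = [1,0,0,−1,0;5]_k` -/
def c5 (k : ℕ) : ℚ := if k % 5 = 0 then 1 else if k % 5 = 3 then -1 else 0

/-- `c₆(k) = [1,0,0,−1,0,0;6]_k` -/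
def c6 (k : ℕ) : ℚ := if k % 6 = 0 then 1 else if k % 6 = 3 then -1 else 0

/-- `c₆′(k) = [0,1,0,0,−1,0;6]_k` -/
def c6' (k : ℕ) : ℚ := if k % 6 = 1 then 1 else if k % 6 = 4 then -1 else 0

/-- `ĉ₆(k) = [0,1,1,0,−1,−1;6]_k` -/
def c6hat (k : ℕ) : ℚ := if k % 6 = 1 ∨ k % 6 = 2 then 1 else if k % 6 = 4 ∨ k % 6 = 5 then -1 else 0

/-- `c₁₂(k) = [1,0,0,−1,−1,−1,−1,0,0,1,1,1;12]_k` -/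
def c12 (k : ℕ) : ℚ :=
  if k % 12 = 0 ∨ k % 12 = 9 ∨ k % 12 = 10 ∨ k % 12 = 11 then 1
  else if k % 12 = 3 ∨ k % 12 = 4 ∨ k % 12 = 5 ∨ k % 12 = 6 then -1 else 0

/-- `f₄(k) = [k−2,−k+1,−k+2,k−1;4]_k` -/
def f4 (k : ℕ) : ℚ :=
  if k % 4 = 0 then (k : ℚ) - 2 else if k % 4 = 1 then -(k : ℚ) + 1
  else if k % 4 = 2 then -(k : ℚ) + 2 else (k : ℚ) - 1

/-- `f₆(k) = [k−3,−2k+2,−2k+4,k,k−1,k−2;6]_k` -/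
def f6 (k : ℕ) : ℚ :=
  if k % 6 = 0 then (k : ℚ) - 3 else if k % 6 = 1 then -2 * (k : ℚ) + 2
  else if k % 6 = 2 then -2 * (k : ℚ) + 4 else if k % 6 = 3 then (k : ℚ)
  else if k % 6 = 4 then (k : ℚ) - 1 else (k : ℚ) - 2

/-- The Legendre symbol `(−1/p)`, as a rational number. -/
def eps1 (p : ℕ) [Fact p.Prime] : ℚ := (legendreSym p (-1) : ℚ)

/-- The Legendre symbol `(−3/p)`, as a rational number. -/
def eps3 (p : ℕ) [Fact p.Prime] : ℚ := (legendreSym p (-3) : ℚ)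

/-- `b = 1` if `p ≡ 1 (mod 4)`, `b = 2` if `p ≡ 7 (mod 8)`, `b = 4` if `p ≡ 3 (mod 8)`. -/
def bb (p : ℕ) : ℚ := if p % 4 = 1 then 1 else if p % 8 = 7 then 2 else 4

/-- The closed formula `F_Vb(k)` for `s_k(p, Vb)`; `h` denotes the class number of `ℚ(√−p)`. -/
def F_Vb (p : ℕ) [Fact p.Prime] (h : ℕ) (k : ℕ) : ℚ :=
  if k % 2 = 0 then
    (2 * (k : ℚ) - 3) * ((p : ℚ) - 1) / (2 ^ 3 * 3) + (1 - eps1 p) / 2 ^ 3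
    - c3hat k * (1 - eps3 p) / (2 * 3) - bb p * (h : ℚ) / 2 ^ 2
  else 0

/-!
Each rational function on the right is expanded explicitly: `(1 - X^d)⁻¹ = ∑ X^(dm)`,
`(1 + X² + X⁴)⁻¹ = (1 - X²)/(1 - X⁶)` has period-6 coefficients `1, 0, -1, 0, 0, 0`, and
`(1 + 3u)/(1 - u)² = ∑ (4m + 1) uᵐ` with `u = X²`. Multiplying by `X²` shifts indices by two, and
the coefficient of `X^k` then agrees with `F_Vb(k)` by a case distinction on `k mod 6`.
-/

namespace PowerSeries

variable {k : Type*} [Field k]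

theorem inv_one_sub_X_pow {d : ℕ} (hd : 0 < d) :
    (1 - X ^ d : k⟦X⟧)⁻¹ = mk fun n => if d ∣ n then 1 else 0 := by
  rw [inv_eq_iff_mul_eq_one (by simp [zero_pow hd.ne']), mul_sub, mul_one]
  ext n
  simp only [map_sub, coeff_mk, coeff_mul_X_pow', coeff_one]
  rcases lt_or_ge n d with hnd | hdn
  · rcases n.eq_zero_or_pos with rfl | hn
    · simp [hd.ne']
    · simp [hnd, Nat.not_dvd_of_pos_of_lt hn hnd, hn.ne']
  · obtain ⟨m, rfl⟩ := Nat.exists_eq_add_of_le' hdn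
    simp [hd.ne', Nat.dvd_add_self_right]

theorem inv_one_add_X_sq_add_X_pow_four :
    (1 + X ^ 2 + X ^ 4 : k⟦X⟧)⁻¹
      = mk fun n => if n % 6 = 0 then 1 else if n % 6 = 2 then -1 else 0 := by
  have hfactor : (1 + X ^ 2 + X ^ 4 : k⟦X⟧)⁻¹ = (1 - X ^ 6)⁻¹ - (1 - X ^ 6)⁻¹ * X ^ 2 := by
    rw [inv_eq_iff_mul_eq_one (by simp)]
    calc ((1 - X ^ 6 : k⟦X⟧)⁻¹ - (1 - X ^ 6)⁻¹ * X ^ 2) * (1 + X ^ 2 + X ^ 4)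
        = (1 - X ^ 6)⁻¹ * (1 - X ^ 6) := by ring
      _ = 1 := PowerSeries.inv_mul_cancel _ (by simp)
  rw [hfactor, inv_one_sub_X_pow (by norm_num)]
  ext n
  simp only [map_sub, coeff_mk, coeff_mul_X_pow']
  split_ifs <;> first | omega | norm_num

theorem one_add_three_mul_X_sq_mul_inv_one_sub_X_sq_sq :
    (1 + 3 * X ^ 2 : k⟦X⟧) * ((1 - X ^ 2) ^ 2)⁻¹
      = mk fun n => if 2 ∣ n then 2 * (n : k) + 1 else 0 := by
  rw [eq_comm, eq_mul_inv_iff_mul_eq (by simp)]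
  set g : k⟦X⟧ := mk fun n => if 2 ∣ n then 2 * (n : k) + 1 else 0
  calc g * (1 - X ^ 2) ^ 2 = g - g * X ^ 2 - g * X ^ 2 + g * X ^ 4 := by ring
    _ = 1 + 3 * X ^ 2 := by
      ext n
      simp only [g, map_add, map_sub, coeff_mk, coeff_mul_X_pow', coeff_one,
        ← map_ofNat C 3, coeff_C]
      rcases Nat.lt_or_ge n 4 with hn | hn
      · interval_cases n <;> norm_num
      · obtain ⟨m, rfl⟩ := Nat.exists_eq_add_of_le' hn
        simp only [show m + 4 - 2 = m + 2 by omega, Nat.add_sub_cancel]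
        split_ifs <;> first | contradiction | omega | (push_cast; ring)

end PowerSeries

theorem stmt_2_general (p : ℕ) [Fact p.Prime] (h : ℕ) :
    (PowerSeries.mk fun k => if 2 ≤ k then F_Vb p h k else 0) =
      ((1 + 3 * X ^ 2) * C (((p : ℚ) - 1) / (2 ^ 3 * 3)) * ((1 - X ^ 2) ^ 2 : PowerSeries ℚ)⁻¹
        + C ((1 - eps1 p) / 2 ^ 3) * (1 - X ^ 2 : PowerSeries ℚ)⁻¹
        + C ((1 - eps3 p) / (2 * 3)) * (1 + X ^ 2 + X ^ 4 : PowerSeries ℚ)⁻¹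
        - C (bb p * (h : ℚ) / 2 ^ 2) * (1 - X ^ 2 : PowerSeries ℚ)⁻¹) * X ^ 2 := by
  rw [mul_right_comm (1 + 3 * X ^ 2), one_add_three_mul_X_sq_mul_inv_one_sub_X_sq_sq,
    inv_one_sub_X_pow two_pos, inv_one_add_X_sq_add_X_pow_four]
  ext n
  rcases Nat.lt_or_ge n 2 with hn | hn
  · simp [coeff_mul_X_pow', Nat.not_le.mpr hn]
  · obtain ⟨m, rfl⟩ := Nat.exists_eq_add_of_le' hn
    simp only [coeff_mk, coeff_mul_X_pow', hn, if_true, Nat.add_sub_cancel, map_add, map_sub,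
      coeff_C_mul, coeff_mul_C]
    unfold F_Vb c3hat
    split_ifs <;> first | omega | (push_cast; ring)

/-- Equivalence of the closed formula and the generating function for `s_k(p, Vb)`:
`∑_{k≥2} F_Vb(k)·t^k = [(1+3t²)(p−1)/(2³·3·(1−t²)²) + (1−(−1/p))/(2³·(1−t²))
  + (1−(−3/p))/(2·3·(1+t²+t⁴)) − bh/(2²·(1−t²))]·t²` in `ℚ⟦t⟧`.
Here `h` is the class number of `ℚ(√−p)`; the identity holds for every `h`. -/
theorem stmt_2 (p : ℕ) [Fact p.Prime] (hp : 5 ≤ p) (h : ℕ) :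
    (PowerSeries.mk fun k => if 2 ≤ k then F_Vb p h k else 0) =
      ((1 + 3 * X ^ 2) * C (((p : ℚ) - 1) / (2 ^ 3 * 3)) * ((1 - X ^ 2) ^ 2 : PowerSeries ℚ)⁻¹
        + C ((1 - eps1 p) / 2 ^ 3) * (1 - X ^ 2 : PowerSeries ℚ)⁻¹
        + C ((1 - eps3 p) / (2 * 3)) * (1 + X ^ 2 + X ^ 4 : PowerSeries ℚ)⁻¹
        - C (bb p * (h : ℚ) / 2 ^ 2) * (1 - X ^ 2 : PowerSeries ℚ)⁻¹) * X ^ 2 :=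
  stmt_2_general p h
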